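/- arXiv:1107.0235 — 2 statements merged into one kernel-verified Lean document; each statement's English description precedes it below -/
import Mathlib

section
/- For every n ≥ 1 and every tuple (i_0,…,i_n) of integers, there exists an array a ∈ G_n of weight (i_0,…,i_n) if and only if (i_0,…,i_n) ∈ ω_n, i.e., if and only if i_0 + i_1 + ⋯ + i_n = 0 + 1 + ⋯ + n and for every subset {k_0 < k_1 < ⋯ < k_s} of {0,1,…,n} one has i_{k_0} + i_{k_1} + ⋯ + i_{k_s} ≥ 0 + 1 + ⋯ + s. -/
/-- `UT n`: strictly upper triangular 0-1 arrays `(a_{i,j})_{0 ≤ i < j ≤ n}`,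
encoded as functions on `Fin (n+1) × Fin (n+1)` vanishing off the region `i < j`. -/
def UT (n : ℕ) : Type :=
  {a : Fin (n + 1) → Fin (n + 1) → ℤ //
    ∀ i j : Fin (n + 1), (i < j → a i j = 0 ∨ a i j = 1) ∧ (¬ i < j → a i j = 0)}

/-- Adjacency in `G_n`: `a` and `b` differ exactly on a triple of positions
`(i,j), (j,l), (i,l)` with `i < j < l`, where one of them has entries `1, 1, 0` and
the other `0, 0, 1`. -/
def UTAdj {n : ℕ} (a b : UT n) : Prop :=
  ∃ i j l : Fin (n + 1), i < j ∧ j < l ∧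
    ((a.1 i j = 1 ∧ a.1 j l = 1 ∧ a.1 i l = 0 ∧
        b.1 i j = 0 ∧ b.1 j l = 0 ∧ b.1 i l = 1) ∨
      (b.1 i j = 1 ∧ b.1 j l = 1 ∧ b.1 i l = 0 ∧
        a.1 i j = 0 ∧ a.1 j l = 0 ∧ a.1 i l = 1)) ∧
    ∀ s t : Fin (n + 1),
      ¬ ((s = i ∧ t = j) ∨ (s = j ∧ t = l) ∨ (s = i ∧ t = l)) → a.1 s t = b.1 s t

/-- The weight of an array: `w_s(a) = ∑_{k<s} (1 - a_{k,s}) + ∑_{k>s} a_{s,k}`. -/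
def UTweight {n : ℕ} (a : UT n) : Fin (n + 1) → ℤ := fun s =>
  (∑ k : Fin (n + 1), if k < s then 1 - a.1 k s else 0) +
    ∑ k : Fin (n + 1), if s < k then a.1 s k else 0

/-- Membership in `ω_n`: the tuple sums to `0 + 1 + ⋯ + n` and every subset of the
entries sums to at least `0 + 1 + ⋯ + (s-1)` where `s` is the size of the subset. -/
def InOmega {n : ℕ} (c : Fin (n + 1) → ℤ) : Prop :=
  (∑ k : Fin (n + 1), c k = ∑ k : Fin (n + 1), (k : ℤ)) ∧
    ∀ s : Finset (Fin (n + 1)), (∑ t ∈ Finset.range s.card, (t : ℤ)) ≤ ∑ k ∈ s, c k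

/-!
Read `a_{ij} = 1` (for `i < j`) as "`i` beats `j`" and `a_{ij} = 0` as "`j` beats `i`": arrays in
`G_n` are round-robin tournaments on `{0, …, n}` and `w_s(a)` is the number of wins of `s`, so the
theorem is Landau's theorem on score sequences, with `0 + 1 + ⋯ + (k - 1) = C(k, 2)`.

Necessity: the players of `S` play `C(|S|, 2)` matches among themselves, each won by one of them.
Sufficiency: give player `v` exactly `c_v` slots and look for an injective assignment of every
match to a slot of one of its two players, that player being declared the winner. The matches with
players in a set `V` number at most `C(|V|, 2) ≤ ∑_{v ∈ V} c_v`, which is Hall's condition. The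
tournament obtained has scores at most `c`, and both have total `C(n + 1, 2)`, so they agree.
-/

open Finset

structure Tournament (α : Type*) [LinearOrder α] where
  winner : {p : α × α // p.1 < p.2} → α
  winner_eq_or : ∀ p, winner p = p.1.1 ∨ winner p = p.1.2

namespace Tournament

variable {α : Type*} [LinearOrder α] [Fintype α]

def score (T : Tournament α) (s : α) : ℕ := #{p | T.winner p = s}

theorem sum_score (T : Tournament α) (S : Finset α) :
    ∑ s ∈ S, T.score s = #{p | T.winner p ∈ S} :=
  sum_card_fiberwise_eq_card_filter _ _ _

theorem choose_two_le_sum_score (T : Tournament α) (S : Finset α) :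
    (#S).choose 2 ≤ ∑ s ∈ S, T.score s := by
  rw [sum_score, ← card_product_filter_lt]
  refine card_le_card_of_surjOn Subtype.val fun x hx => ?_
  simp only [coe_filter, mem_product, Set.mem_ofPred_eq] at hx
  refine ⟨⟨x, hx.2⟩, ?_, rfl⟩
  rcases T.winner_eq_or ⟨x, hx.2⟩ with h | h <;> simp [h, hx.1]

theorem sum_score_univ (T : Tournament α) : ∑ s, T.score s = (Fintype.card α).choose 2 := by
  rw [sum_score, filter_true_of_mem fun _ _ => mem_univ _, card_univ, Fintype.card_subtype,
    ← univ_product_univ, card_product_filter_lt, card_univ]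

theorem exists_score_le (c : α → ℕ) (hc : ∀ S : Finset α, (#S).choose 2 ≤ ∑ s ∈ S, c s) :
    ∃ T : Tournament α, ∀ s, T.score s ≤ c s := by
  let slots : Finset α → Finset (Σ _ : α, ℕ) := fun V => V.sigma fun v => range (c v)
  have hall : ∀ A : Finset {p : α × α // p.1 < p.2},
      #A ≤ #(A.biUnion fun p => slots {p.1.1, p.1.2}) := by
    intro A
    let V := A.biUnion fun p => ({p.1.1, p.1.2} : Finset α)
    calc #A ≤ #{x ∈ V ×ˢ V | x.1 < x.2} := by
          refine card_le_card_of_injOn Subtype.val (fun p hp => ?_) Subtype.val_injective.injOn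
          simp only [coe_filter, mem_product, Set.mem_ofPred_eq, V, mem_biUnion]
          exact ⟨⟨⟨p, hp, by simp⟩, ⟨p, hp, by simp⟩⟩, p.2⟩
      _ = (#V).choose 2 := card_product_filter_lt
      _ ≤ ∑ v ∈ V, c v := hc V
      _ = #(slots V) := by simp [slots]
      _ ≤ _ := card_le_card fun x hx => by
          simp only [slots, V, mem_sigma, mem_biUnion] at hx ⊢
          obtain ⟨⟨p, hp, hxp⟩, hx⟩ := hx
          exact ⟨p, hp, hxp, hx⟩
  obtain ⟨f, hf_inj, hf_mem⟩ := (all_card_le_biUnion_card_iff_exists_injective _).1 hall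
  refine ⟨⟨fun p => (f p).1, fun p => by simpa [slots] using (mem_sigma.1 (hf_mem p)).1⟩,
    fun s => ?_⟩
  calc score _ s ≤ #(slots {s}) := by
        refine card_le_card_of_injOn f (fun p hp => ?_) hf_inj.injOn
        simp only [coe_filter, Set.mem_ofPred_eq, mem_univ, true_and] at hp
        exact mem_sigma.2 ⟨mem_singleton.2 hp, (mem_sigma.1 (hf_mem p)).2⟩
    _ = c s := by simp [slots]

theorem exists_score_eq_iff (c : α → ℕ) :
    (∃ T : Tournament α, T.score = c) ↔
      ∑ s, c s = (Fintype.card α).choose 2 ∧ ∀ S : Finset α, (#S).choose 2 ≤ ∑ s ∈ S, c s := by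
  constructor
  · rintro ⟨T, rfl⟩
    exact ⟨T.sum_score_univ, T.choose_two_le_sum_score⟩
  · rintro ⟨hsum, hS⟩
    obtain ⟨T, hT⟩ := exists_score_le c hS
    have h_eq := (sum_eq_sum_iff_of_le fun s _ => hT s).1 (T.sum_score_univ.trans hsum.symm)
    exact ⟨T, funext fun s => h_eq s (mem_univ s)⟩

end Tournament

namespace UT

variable {n : ℕ}

def toTournament (a : UT n) : Tournament (Fin (n + 1)) where
  winner p := if a.1 p.1.1 p.1.2 = 1 then p.1.1 else p.1.2
  winner_eq_or p := by split_ifs <;> simp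

def ofTournament (T : Tournament (Fin (n + 1))) : UT n :=
  ⟨fun i j => if h : i < j then if T.winner ⟨(i, j), h⟩ = i then 1 else 0 else 0,
    fun i j => ⟨fun h => by simp only [dif_pos h]; split_ifs <;> simp, fun h => dif_neg h⟩⟩

theorem toTournament_ofTournament (T : Tournament (Fin (n + 1))) :
    (ofTournament T).toTournament = T := by
  obtain ⟨g, hg⟩ := T
  simp only [toTournament, ofTournament, Tournament.mk.injEq]
  funext p
  rcases hg p with h | h <;> simp [h, p.2, p.2.ne']

end UT

theorem UTweight_eq_score_toTournament {n : ℕ} (a : UT n) (s : Fin (n + 1)) :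
    UTweight a s = a.toTournament.score s := by
  have h01 : ∀ i j, i < j → a.1 i j = 0 ∨ a.1 i j = 1 := fun i j => (a.2 i j).1
  set beaten : Finset (Fin (n + 1)) := {k | (k < s ∧ a.1 k s = 0) ∨ (s < k ∧ a.1 s k = 1)}
  have h_weight : UTweight a s = #beaten := by
    rw [UTweight, ← sum_add_distrib, natCast_card_filter]
    refine sum_congr rfl fun k _ => ?_
    rcases lt_trichotomy k s with hks | rfl | hsk
    · rcases h01 k s hks with h | h <;> simp [hks, hks.not_gt, h]
    · simp
    · rcases h01 s k hsk with h | h <;> simp [hsk, hsk.not_gt, h]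
  have h_card : a.toTournament.score s = #beaten := by
    -- a match won by `s` corresponds to the opponent of `s` in it
    refine card_nbij (fun p => if p.1.1 = s then p.1.2 else p.1.1) ?_ ?_ ?_
    · intro p hp
      simp only [UT.toTournament, coe_filter, mem_univ, true_and, Set.mem_ofPred_eq, beaten] at hp ⊢
      grind
    · intro p hp q hq hpq
      simp only [UT.toTournament, SetLike.mem_coe] at hp hq hpq
      grind
    · intro k hk
      simp only [UT.toTournament, coe_filter, mem_univ, true_and, Set.mem_ofPred_eq, Set.mem_image,
        Subtype.exists, exists_and_right, Prod.exists, beaten] at hk ⊢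
      grind
  rw [h_weight, h_card]

theorem sum_range_intCast_eq_choose_two (k : ℕ) : ∑ t ∈ range k, (t : ℤ) = (k.choose 2 : ℕ) := by
  rw [← Nat.cast_sum, sum_range_id, Nat.choose_two_right]

theorem InOmega.nonneg {n : ℕ} {c : Fin (n + 1) → ℤ} (hc : InOmega c) (k : Fin (n + 1)) :
    0 ≤ c k := by
  simpa using hc.2 {k}

theorem inOmega_natCast_iff_exists_score_eq {n : ℕ} (d : Fin (n + 1) → ℕ) :
    InOmega (fun s => (d s : ℤ)) ↔ ∃ T : Tournament (Fin (n + 1)), T.score = d := by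
  rw [Tournament.exists_score_eq_iff, Fintype.card_fin, InOmega,
    Fin.sum_univ_eq_sum_range (fun k => (k : ℤ))]
  simp_rw [sum_range_intCast_eq_choose_two]
  norm_cast

theorem weight_realizable_iff_inOmega_general (n : ℕ) (c : Fin (n + 1) → ℤ) :
    (∃ a : UT n, UTweight a = c) ↔ InOmega c := by
  constructor
  · rintro ⟨a, rfl⟩
    rw [funext (UTweight_eq_score_toTournament a), inOmega_natCast_iff_exists_score_eq]
    exact ⟨_, rfl⟩
  · intro hc
    lift c to Fin (n + 1) → ℕ using hc.nonneg
    obtain ⟨T, rfl⟩ := (inOmega_natCast_iff_exists_score_eq c).1 hc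
    refine ⟨UT.ofTournament T, funext fun s => ?_⟩
    rw [UTweight_eq_score_toTournament, UT.toTournament_ofTournament]

/-- A tuple of integers is the weight of some array in `G_n` iff it belongs to `ω_n`. -/
theorem weight_realizable_iff_inOmega (n : ℕ) (hn : 1 ≤ n) (c : Fin (n + 1) → ℤ) :
    (∃ a : UT n, UTweight a = c) ↔ InOmega c :=
  weight_realizable_iff_inOmega_general n c
end

section
/- Let m, n ≥ 0, let (i_0,…,i_m) ∈ ω_m and (j_0,…,j_n) ∈ ω_n, and let (k_0,…,k_{m+n+1}) be a permutation of the tuple (i_0,…,i_m, j_0+m+1,…,j_n+m+1). Then the weight subgraph G(k_0,…,k_{m+n+1}) of G_{m+n+1} is isomorphic as a graph to the box product of G(i_0,…,i_m) and G(j_0,…,j_n), i.e., the graph on pairs (x,y) with x of weight (i_0,…,i_m) in G_m and y of weight (j_0,…,j_n) in G_n, where (x,y) is adjacent to (x',y') iff either y = y' and x is adjacent to x' in G_m, or x = x' and y is adjacent to y' in G_n. In particular, the number of arrays in G_{m+n+1} of weight (k_0,…,k_{m+n+1}) equals the number of arrays in G_m of weight (i_0,…,i_m) times the number of arrays in G_n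 of weight (j_0,…,j_n). -/
/-!
Read an array of `G_N` as a tournament on `{0, …, N}` in which, for `x < y`, `x` beats `y` iff
`a_{x,y} = 1`. Then `w_s(a)` is the score of `s`, and adjacency is the reversal of a directed
3-cycle, a condition that does not refer to the order of the vertices. Pulling back along `σ`
splits the vertices into a block `L ≅ {0, …, m}` with target scores `i` and a block
`R ≅ {0, …, n}` with target scores `j + m + 1`. As `j ∈ ω_n`, the scores in `R` add up to
`C(n + 1, 2) + (n + 1)(m + 1)`, the most that `n + 1` players can score against `m + 1` others,
so every vertex of `R` beats every vertex of `L`. Hence a tournament of weight `k` is the same as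
a pair of tournaments of weights `i` and `j` glued with `R` above `L`, and since all games between
the blocks go the same way, no 3-cycle meets both blocks.
-/

open Finset

theorem UTAdj.symm {n : ℕ} {a b : UT n} (h : UTAdj a b) : UTAdj b a := by
  obtain ⟨i, j, l, hij, hjl, hcases, hagree⟩ := h
  exact ⟨i, j, l, hij, hjl, hcases.symm, fun s t hst => (hagree s t hst).symm⟩

namespace UT

variable {m n N : ℕ}

def beats (a : UT n) (x y : Fin (n + 1)) : ℤ :=
  if x < y then a.1 x y else if y < x then 1 - a.1 y x else 0

@[simp]
theorem beats_self (a : UT n) (x : Fin (n + 1)) : a.beats x x = 0 := by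
  simp [beats]

theorem beats_of_lt (a : UT n) {x y : Fin (n + 1)} (h : x < y) : a.beats x y = a.1 x y := by
  simp [beats, h]

theorem beats_swap (a : UT n) {x y : Fin (n + 1)} (h : x ≠ y) :
    a.beats y x = 1 - a.beats x y := by
  rcases h.lt_or_gt with h | h <;> simp [beats, h, h.not_gt]

theorem beats_eq_zero_or_one (a : UT n) (x y : Fin (n + 1)) :
    a.beats x y = 0 ∨ a.beats x y = 1 := by
  unfold beats
  split_ifs with hxy hyx
  · exact (a.2 x y).1 hxy
  · rcases (a.2 y x).1 hyx with h | h <;> simp [h]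
  · exact Or.inl rfl

theorem beats_le_one (a : UT n) (x y : Fin (n + 1)) : a.beats x y ≤ 1 := by
  rcases a.beats_eq_zero_or_one x y with h | h <;> simp [h]

theorem ne_of_beats_eq_one {a : UT n} {x y : Fin (n + 1)} (h : a.beats x y = 1) : x ≠ y := by
  rintro rfl
  simp at h

theorem ext_beats {a b : UT n} (h : ∀ x y, a.beats x y = b.beats x y) : a = b := by
  apply Subtype.ext
  funext x y
  by_cases hxy : x < y
  · rw [← beats_of_lt a hxy, ← beats_of_lt b hxy, h]
  · rw [(a.2 x y).2 hxy, (b.2 x y).2 hxy]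

theorem UTweight_eq_sum_beats (a : UT n) (s : Fin (n + 1)) :
    UTweight a s = ∑ y, a.beats s y := by
  rw [UTweight, ← sum_add_distrib]
  refine sum_congr rfl fun y _ => ?_
  rcases lt_trichotomy y s with h | rfl | h
  · simp [beats, h, h.not_gt]
  · simp [beats]
  · simp [beats, h, h.not_gt]

theorem sum_sum_beats (a : UT n) (R : Finset (Fin (n + 1))) :
    ∑ x ∈ R, ∑ y ∈ R, a.beats x y = ∑ t ∈ range #R, (t : ℤ) := by
  induction R using Finset.induction_on with
  | empty => simp
  | insert z R hz ih =>
    have hgames : ∑ y ∈ R, (a.beats z y + a.beats y z) = #R := by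
      rw [sum_congr rfl fun y hy => by
        rw [a.beats_swap (ne_of_mem_of_not_mem hy hz).symm, add_sub_cancel]]
      simp
    rw [sum_insert hz, sum_insert hz, card_insert_of_notMem hz, sum_range_succ, ← ih,
      ← hgames, sum_add_distrib]
    simp_rw [sum_insert hz]
    rw [sum_add_distrib, beats_self]
    ring

theorem beats_eq_one_of_sum_UTweight (a : UT n) (R : Finset (Fin (n + 1)))
    (hR : ∑ t ∈ range #R, (t : ℤ) + #R * #Rᶜ ≤ ∑ x ∈ R, UTweight a x)
    {x y : Fin (n + 1)} (hx : x ∈ R) (hy : y ∉ R) : a.beats x y = 1 := by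
  have hsplit : ∑ x ∈ R, UTweight a x =
      ∑ t ∈ range #R, (t : ℤ) + ∑ x ∈ R, ∑ y ∈ Rᶜ, a.beats x y := by
    rw [← sum_sum_beats a R, ← sum_add_distrib]
    exact sum_congr rfl fun x _ => by rw [UTweight_eq_sum_beats, sum_add_sum_compl]
  have hcross : ∑ x ∈ R, ∑ y ∈ Rᶜ, a.beats x y = ∑ x ∈ R, ∑ y ∈ Rᶜ, (1 : ℤ) := by
    refine le_antisymm (sum_le_sum fun _ _ => sum_le_sum fun _ _ => a.beats_le_one _ _) ?_
    simp only [sum_const, nsmul_eq_mul, mul_one]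
    linarith
  have hrow := (sum_eq_sum_iff_of_le fun x _ =>
    sum_le_sum fun y _ => a.beats_le_one x y).1 hcross x hx
  exact (sum_eq_sum_iff_of_le fun y _ => a.beats_le_one x y).1 hrow y (mem_compl.2 hy)

def ofBeats (g : Fin (n + 1) → Fin (n + 1) → ℤ) (hg : ∀ x y, g x y = 0 ∨ g x y = 1) : UT n :=
  ⟨fun x y => if x < y then g x y else 0, fun x y =>
    ⟨fun h => by simpa only [if_pos h] using hg x y, fun h => if_neg h⟩⟩

theorem beats_ofBeats {g : Fin (n + 1) → Fin (n + 1) → ℤ} {hg : ∀ x y, g x y = 0 ∨ g x y = 1}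
    (hself : ∀ x, g x x = 0) (hswap : ∀ x y, x ≠ y → g y x = 1 - g x y) (x y : Fin (n + 1)) :
    (ofBeats g hg).beats x y = g x y := by
  rcases lt_trichotomy x y with h | rfl | h
  · simp [beats, ofBeats, h]
  · simp [hself]
  · simp [beats, ofBeats, h, h.not_gt, hswap y x h.ne]

def comap (f : Fin (m + 1) ↪ Fin (n + 1)) (a : UT n) : UT m :=
  ofBeats (fun u v => a.beats (f u) (f v)) fun _ _ => a.beats_eq_zero_or_one _ _

@[simp]
theorem beats_comap (f : Fin (m + 1) ↪ Fin (n + 1)) (a : UT n) (u v : Fin (m + 1)) :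
    (a.comap f).beats u v = a.beats (f u) (f v) :=
  beats_ofBeats (n := m) (fun _ => a.beats_self _)
    (fun _ _ h => a.beats_swap (f.injective.ne h)) u v

structure IsCycleReversal (a b : UT n) (p q r : Fin (n + 1)) : Prop where
  beats_pq : a.beats p q = 1
  beats_qr : a.beats q r = 1
  beats_rp : a.beats r p = 1
  reversed_pq : b.beats p q = 0
  reversed_qr : b.beats q r = 0
  reversed_rp : b.beats r p = 0
  beats_eq_off : ∀ s t,
    (s ∉ ({p, q, r} : Set (Fin (n + 1))) ∨ t ∉ ({p, q, r} : Set (Fin (n + 1)))) →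
      a.beats s t = b.beats s t

namespace IsCycleReversal

variable {a b : UT n} {p q r : Fin (n + 1)}

theorem rotate (h : IsCycleReversal a b p q r) : IsCycleReversal a b q r p where
  beats_pq := h.beats_qr
  beats_qr := h.beats_rp
  beats_rp := h.beats_pq
  reversed_pq := h.reversed_qr
  reversed_qr := h.reversed_rp
  reversed_rp := h.reversed_pq
  beats_eq_off s t hst :=
    h.beats_eq_off s t (by rwa [Set.pair_comm r p, Set.insert_comm q p] at hst)

theorem symm (h : IsCycleReversal a b p q r) : IsCycleReversal b a p r q := by
  have hpq := ne_of_beats_eq_one h.beats_pq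
  have hqr := ne_of_beats_eq_one h.beats_qr
  have hrp := ne_of_beats_eq_one h.beats_rp
  refine ⟨?_, ?_, ?_, ?_, ?_, ?_, fun s t hst => (h.beats_eq_off s t ?_).symm⟩
  · rw [b.beats_swap hrp, h.reversed_rp, sub_zero]
  · rw [b.beats_swap hqr, h.reversed_qr, sub_zero]
  · rw [b.beats_swap hpq, h.reversed_pq, sub_zero]
  · rw [a.beats_swap hrp, h.beats_rp, sub_self]
  · rw [a.beats_swap hqr, h.beats_qr, sub_self]
  · rw [a.beats_swap hpq, h.beats_pq, sub_self]
  · simpa only [Set.pair_comm r q] using hst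

theorem utAdj_of_sorted (h : IsCycleReversal a b p q r) (hpq : p < q) (hqr : q < r) :
    UTAdj a b := by
  have hpr := hpq.trans hqr
  refine ⟨p, q, r, hpq, hqr, Or.inl ⟨?_, ?_, ?_, ?_, ?_, ?_⟩, fun s t hst => ?_⟩
  · rw [← a.beats_of_lt hpq, h.beats_pq]
  · rw [← a.beats_of_lt hqr, h.beats_qr]
  · rw [← a.beats_of_lt hpr, a.beats_swap hpr.ne', h.beats_rp, sub_self]
  · rw [← b.beats_of_lt hpq, h.reversed_pq]
  · rw [← b.beats_of_lt hqr, h.reversed_qr]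
  · rw [← b.beats_of_lt hpr, b.beats_swap hpr.ne', h.reversed_rp, sub_zero]
  by_cases hst' : s < t
  · rw [← a.beats_of_lt hst', ← b.beats_of_lt hst']
    refine h.beats_eq_off s t (not_and_or.1 fun ⟨hs, ht⟩ => hst ?_)
    simp only [Set.mem_insert_iff, Set.mem_singleton_iff] at hs ht
    rcases hs with rfl | rfl | rfl <;> rcases ht with rfl | rfl | rfl <;>
      first | tauto | order
  · rw [(a.2 s t).2 hst', (b.2 s t).2 hst']

theorem utAdj_of_min (h : IsCycleReversal a b p q r) (hpq : p < q) (hpr : p < r) :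
    UTAdj a b := by
  rcases (ne_of_beats_eq_one h.beats_qr).lt_or_gt with hqr | hrq
  · exact h.utAdj_of_sorted hpq hqr
  · exact (h.symm.utAdj_of_sorted hpr hrq).symm

theorem utAdj (h : IsCycleReversal a b p q r) : UTAdj a b := by
  have hpq := ne_of_beats_eq_one h.beats_pq
  have hqr := ne_of_beats_eq_one h.beats_qr
  have hrp := ne_of_beats_eq_one h.beats_rp
  rcases hpq.lt_or_gt with hpq | hqp
  · rcases hrp.lt_or_gt with hrp | hpr
    · exact h.rotate.rotate.utAdj_of_min hrp (hrp.trans hpq)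
    · exact h.utAdj_of_min hpq hpr
  · rcases hqr.lt_or_gt with hqr | hrq
    · exact h.rotate.utAdj_of_min hqr hqp
    · exact h.rotate.rotate.utAdj_of_min (hrq.trans hqp) hrq

end IsCycleReversal

theorem exists_isCycleReversal_of_utAdj {a b : UT n} (h : UTAdj a b) :
    ∃ p q r, IsCycleReversal a b p q r := by
  obtain ⟨i, j, l, hij, hjl, hcases, hagree⟩ := h
  have hil := hij.trans hjl
  have hbeats : ∀ s t, (s ∉ ({i, j, l} : Set (Fin (n + 1))) ∨
      t ∉ ({i, j, l} : Set (Fin (n + 1)))) → a.beats s t = b.beats s t := by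
    have hentry : ∀ s t, (s ∉ ({i, j, l} : Set (Fin (n + 1))) ∨
        t ∉ ({i, j, l} : Set (Fin (n + 1)))) → a.1 s t = b.1 s t := by
      refine fun s t hst => hagree s t ?_
      simp only [Set.mem_insert_iff, Set.mem_singleton_iff] at hst
      rintro (⟨rfl, rfl⟩ | ⟨rfl, rfl⟩ | ⟨rfl, rfl⟩) <;> tauto
    intro s t hst
    unfold beats
    split_ifs
    · exact hentry s t hst
    · rw [hentry t s hst.symm]
    · rfl
  rcases hcases with ⟨h1, h2, h3, h4, h5, h6⟩ | ⟨h1, h2, h3, h4, h5, h6⟩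
  · refine ⟨i, j, l, ⟨?_, ?_, ?_, ?_, ?_, ?_, hbeats⟩⟩
    · rwa [a.beats_of_lt hij]
    · rwa [a.beats_of_lt hjl]
    · rw [a.beats_swap hil.ne, a.beats_of_lt hil, h3, sub_zero]
    · rwa [b.beats_of_lt hij]
    · rwa [b.beats_of_lt hjl]
    · rw [b.beats_swap hil.ne, b.beats_of_lt hil, h6, sub_self]
  · refine ⟨i, l, j, ⟨?_, ?_, ?_, ?_, ?_, ?_, fun s t hst => hbeats s t ?_⟩⟩
    · rwa [a.beats_of_lt hil]
    · rw [a.beats_swap hjl.ne, a.beats_of_lt hjl, h5, sub_zero]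
    · rw [a.beats_swap hij.ne, a.beats_of_lt hij, h4, sub_zero]
    · rwa [b.beats_of_lt hil]
    · rw [b.beats_swap hjl.ne, b.beats_of_lt hjl, h2, sub_self]
    · rw [b.beats_swap hij.ne, b.beats_of_lt hij, h1, sub_self]
    · simpa only [Set.pair_comm l j] using hst

theorem utAdj_iff_exists_isCycleReversal (a b : UT n) :
    UTAdj a b ↔ ∃ p q r, IsCycleReversal a b p q r :=
  ⟨exists_isCycleReversal_of_utAdj, fun ⟨_, _, _, h⟩ => h.utAdj⟩

namespace IsCycleReversal

variable {a b : UT N} {f : Fin (m + 1) ↪ Fin (N + 1)} {p q r : Fin (m + 1)}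

theorem comap (h : IsCycleReversal a b (f p) (f q) (f r)) :
    IsCycleReversal (a.comap f) (b.comap f) p q r := by
  obtain ⟨h₁, h₂, h₃, h₄, h₅, h₆, hoff⟩ := h
  refine ⟨?_, ?_, ?_, ?_, ?_, ?_, fun s t hst => ?_⟩ <;> simp only [beats_comap] <;>
    try assumption
  exact hoff _ _ (by simpa [f.injective.eq_iff] using hst)

theorem of_comap
    (hout : ∀ x y, (x ∉ Set.range f ∨ y ∉ Set.range f) → a.beats x y = b.beats x y)
    (h : IsCycleReversal (a.comap f) (b.comap f) p q r) :
    IsCycleReversal a b (f p) (f q) (f r) := by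
  obtain ⟨h₁, h₂, h₃, h₄, h₅, h₆, hoff⟩ := h
  simp only [beats_comap] at h₁ h₂ h₃ h₄ h₅ h₆
  refine ⟨h₁, h₂, h₃, h₄, h₅, h₆, fun s t hst => ?_⟩
  by_cases hst' : s ∈ Set.range f ∧ t ∈ Set.range f
  · obtain ⟨⟨s, rfl⟩, ⟨t, rfl⟩⟩ := hst'
    simpa using hoff s t (by simpa [f.injective.eq_iff] using hst)
  · exact hout s t (not_and_or.1 hst')

theorem comap_eq_comap (h : IsCycleReversal a b (f p) (f q) (f r))
    (g : Fin (n + 1) ↪ Fin (N + 1)) (hfg : ∀ u v, g v ≠ f u) : a.comap g = b.comap g :=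
  ext_beats fun v v' => by
    simpa using h.beats_eq_off (g v) (g v') (Or.inl (by simp [hfg]))

end IsCycleReversal

def sumBeats (b : UT m) (c : UT n) :
    Fin (m + 1) ⊕ Fin (n + 1) → Fin (m + 1) ⊕ Fin (n + 1) → ℤ
  | .inl u, .inl u' => b.beats u u'
  | .inl _, .inr _ => 0
  | .inr _, .inl _ => 1
  | .inr v, .inr v' => c.beats v v'

theorem sumBeats_eq_zero_or_one (b : UT m) (c : UT n) (z z' : Fin (m + 1) ⊕ Fin (n + 1)) :
    sumBeats b c z z' = 0 ∨ sumBeats b c z z' = 1 := by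
  rcases z with u | v <;> rcases z' with u' | v' <;>
    simp [sumBeats, beats_eq_zero_or_one]

theorem sumBeats_swap (b : UT m) (c : UT n) {z z' : Fin (m + 1) ⊕ Fin (n + 1)} (h : z ≠ z') :
    sumBeats b c z' z = 1 - sumBeats b c z z' := by
  rcases z with u | v <;> rcases z' with u' | v' <;> simp only [sumBeats]
  · exact b.beats_swap (by simpa using h)
  · simp
  · simp
  · exact c.beats_swap (by simpa using h)

variable (e : Fin (m + 1) ⊕ Fin (n + 1) ≃ Fin (N + 1))

def glue (b : UT m) (c : UT n) : UT N :=
  ofBeats (fun x y => sumBeats b c (e.symm x) (e.symm y)) fun _ _ => sumBeats_eq_zero_or_one ..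

@[simp]
theorem beats_glue (b : UT m) (c : UT n) (z z' : Fin (m + 1) ⊕ Fin (n + 1)) :
    (glue e b c).beats (e z) (e z') = sumBeats b c z z' := by
  rw [glue, beats_ofBeats (n := N)]
  · simp
  · intro x
    rcases e.symm x with u | v <;> simp [sumBeats]
  · exact fun x y h => sumBeats_swap b c (e.symm.injective.ne h)

def fst (a : UT N) : UT m := a.comap (Function.Embedding.inl.trans e.toEmbedding)

def snd (a : UT N) : UT n := a.comap (Function.Embedding.inr.trans e.toEmbedding)

@[simp]
theorem beats_fst (a : UT N) (u u' : Fin (m + 1)) :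
    (a.fst e).beats u u' = a.beats (e (.inl u)) (e (.inl u')) := by
  simp [fst]

@[simp]
theorem beats_snd (a : UT N) (v v' : Fin (n + 1)) :
    (a.snd e).beats v v' = a.beats (e (.inr v)) (e (.inr v')) := by
  simp [snd]

@[simp]
theorem fst_glue (b : UT m) (c : UT n) : (glue e b c).fst e = b :=
  ext_beats fun u u' => by simp [sumBeats]

@[simp]
theorem snd_glue (b : UT m) (c : UT n) : (glue e b c).snd e = c :=
  ext_beats fun v v' => by simp [sumBeats]

theorem glue_fst_snd {a : UT N} (hdom : ∀ u v, a.beats (e (.inr v)) (e (.inl u)) = 1) :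
    glue e (a.fst e) (a.snd e) = a := by
  refine ext_beats fun x y => ?_
  obtain ⟨z, rfl⟩ := e.surjective x
  obtain ⟨z', rfl⟩ := e.surjective y
  rcases z with u | v <;> rcases z' with u' | v'
  · simp [sumBeats]
  · rw [a.beats_swap (e.injective.ne Sum.inr_ne_inl), hdom]
    simp [sumBeats]
  · simp [sumBeats, hdom]
  · simp [sumBeats]

theorem UTweight_glue (b : UT m) (c : UT n) (z : Fin (m + 1) ⊕ Fin (n + 1)) :
    UTweight (glue e b c) (e z) = Sum.elim (UTweight b) (fun v => UTweight c v + m + 1) z := by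
  rw [UTweight_eq_sum_beats, ← e.sum_comp, Fintype.sum_sum_type]
  rcases z with u | v <;> simp [sumBeats, UTweight_eq_sum_beats]
  ring

theorem IsCycleReversal.inl_or_inr_of_glue {b : UT m} {c : UT n} {a' : UT N}
    {z₁ z₂ z₃ : Fin (m + 1) ⊕ Fin (n + 1)}
    (h : IsCycleReversal (glue e b c) a' (e z₁) (e z₂) (e z₃)) :
    (∃ p q r, z₁ = .inl p ∧ z₂ = .inl q ∧ z₃ = .inl r) ∨
      (∃ p q r, z₁ = .inr p ∧ z₂ = .inr q ∧ z₃ = .inr r) := by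
  have h₁ := h.beats_pq
  have h₂ := h.beats_qr
  have h₃ := h.beats_rp
  rcases z₁ with p | p <;> rcases z₂ with q | q <;> rcases z₃ with r | r <;>
    simp only [beats_glue, sumBeats, zero_ne_one] at h₁ h₂ h₃
  · exact .inl ⟨p, q, r, rfl, rfl, rfl⟩
  · exact .inr ⟨p, q, r, rfl, rfl, rfl⟩

theorem IsCycleReversal.glue_inl {b b' : UT m} {p q r : Fin (m + 1)}
    (h : IsCycleReversal b b' p q r) (c : UT n) :
    IsCycleReversal (glue e b c) (glue e b' c) (e (.inl p)) (e (.inl q)) (e (.inl r)) := by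
  rw [← fst_glue e b c, ← fst_glue e b' c] at h
  refine IsCycleReversal.of_comap (fun x y hxy => ?_) h
  obtain ⟨z, rfl⟩ := e.surjective x
  obtain ⟨z', rfl⟩ := e.surjective y
  rcases z with u | v <;> rcases z' with u' | v' <;> simp_all [sumBeats]

theorem IsCycleReversal.glue_inr {c c' : UT n} {p q r : Fin (n + 1)}
    (h : IsCycleReversal c c' p q r) (b : UT m) :
    IsCycleReversal (glue e b c) (glue e b c') (e (.inr p)) (e (.inr q)) (e (.inr r)) := by
  rw [← snd_glue e b c, ← snd_glue e b c'] at h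
  refine IsCycleReversal.of_comap (fun x y hxy => ?_) h
  obtain ⟨z, rfl⟩ := e.surjective x
  obtain ⟨z', rfl⟩ := e.surjective y
  rcases z with u | v <;> rcases z' with u' | v' <;> simp_all [sumBeats]

theorem IsCycleReversal.of_glue_inl {b b' : UT m} {c c' : UT n} {p q r : Fin (m + 1)}
    (h : IsCycleReversal (glue e b c) (glue e b' c') (e (.inl p)) (e (.inl q)) (e (.inl r))) :
    c = c' ∧ IsCycleReversal b b' p q r := by
  have hc : (glue e b c).snd e = (glue e b' c').snd e :=
    h.comap_eq_comap (f := Function.Embedding.inl.trans e.toEmbedding) _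
      fun _ _ => e.injective.ne Sum.inr_ne_inl
  have hb : IsCycleReversal ((glue e b c).fst e) ((glue e b' c').fst e) p q r := h.comap
  exact ⟨by simpa using hc, by simpa using hb⟩

theorem IsCycleReversal.of_glue_inr {b b' : UT m} {c c' : UT n} {p q r : Fin (n + 1)}
    (h : IsCycleReversal (glue e b c) (glue e b' c') (e (.inr p)) (e (.inr q)) (e (.inr r))) :
    b = b' ∧ IsCycleReversal c c' p q r := by
  have hb : (glue e b c).fst e = (glue e b' c').fst e :=
    h.comap_eq_comap (f := Function.Embedding.inr.trans e.toEmbedding) _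
      fun _ _ => e.injective.ne Sum.inl_ne_inr
  have hc : IsCycleReversal ((glue e b c).snd e) ((glue e b' c').snd e) p q r := h.comap
  exact ⟨by simpa using hb, by simpa using hc⟩

theorem utAdj_glue_iff {b b' : UT m} {c c' : UT n} :
    UTAdj (glue e b c) (glue e b' c') ↔ (c = c' ∧ UTAdj b b') ∨ (b = b' ∧ UTAdj c c') := by
  simp only [utAdj_iff_exists_isCycleReversal]
  constructor
  · rintro ⟨x, y, z, h⟩
    obtain ⟨z₁, rfl⟩ := e.surjective x
    obtain ⟨z₂, rfl⟩ := e.surjective y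
    obtain ⟨z₃, rfl⟩ := e.surjective z
    rcases h.inl_or_inr_of_glue with ⟨p, q, r, rfl, rfl, rfl⟩ | ⟨p, q, r, rfl, rfl, rfl⟩
    · obtain ⟨hc, hb⟩ := h.of_glue_inl
      exact .inl ⟨hc, p, q, r, hb⟩
    · obtain ⟨hb, hc⟩ := h.of_glue_inr
      exact .inr ⟨hb, p, q, r, hc⟩
  · rintro (⟨rfl, p, q, r, h⟩ | ⟨rfl, p, q, r, h⟩)
    · exact ⟨_, _, _, h.glue_inl e c⟩
    · exact ⟨_, _, _, h.glue_inr e b⟩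

theorem beats_inr_inl_eq_one {j : Fin (n + 1) → ℤ}
    (hj : ∑ v, j v = ∑ v : Fin (n + 1), (v : ℤ)) {a : UT N}
    (ha : ∀ v, UTweight a (e (.inr v)) = j v + m + 1) (u : Fin (m + 1)) (v : Fin (n + 1)) :
    a.beats (e (.inr v)) (e (.inl u)) = 1 := by
  set R := univ.map (Function.Embedding.inr.trans e.toEmbedding)
  have hR : #R = n + 1 := by simp [R]
  have hRc : #Rᶜ = m + 1 := by
    have hN := Fintype.card_congr e
    simp only [Fintype.card_sum, Fintype.card_fin] at hN
    rw [card_compl, hR, Fintype.card_fin]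
    omega
  refine a.beats_eq_one_of_sum_UTweight R (le_of_eq ?_) (by simp [R]) (by simp [R])
  rw [hR, hRc, sum_map, ← Fin.sum_univ_eq_sum_range]
  simp only [Function.Embedding.trans_apply, Function.Embedding.inr_apply,
    Equiv.coe_toEmbedding, ha, sum_add_distrib, hj, sum_const, card_univ, Fintype.card_fin,
    nsmul_eq_mul]
  push_cast
  ring

section WeightSubgraph

variable {i : Fin (m + 1) → ℤ} {j : Fin (n + 1) → ℤ} {k : Fin (N + 1) → ℤ}
  (hk : ∀ z, k (e z) = Sum.elim i (fun v => j v + m + 1) z)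
  (hj : ∑ v, j v = ∑ v : Fin (n + 1), (v : ℤ))

include hk in
theorem UTweight_glue_eq {b : UT m} {c : UT n} (hb : UTweight b = i) (hc : UTweight c = j) :
    UTweight (glue e b c) = k := by
  funext x
  obtain ⟨z, rfl⟩ := e.surjective x
  rw [UTweight_glue, hk, hb, hc]

include hk hj in
theorem glue_fst_snd_of_UTweight_eq {a : UT N} (ha : UTweight a = k) :
    glue e (a.fst e) (a.snd e) = a :=
  glue_fst_snd e (beats_inr_inl_eq_one e hj fun v => by rw [ha, hk]; rfl)

include hk hj in
theorem UTweight_fst_snd_of_UTweight_eq {a : UT N} (ha : UTweight a = k) :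
    UTweight (a.fst e) = i ∧ UTweight (a.snd e) = j := by
  have hw := UTweight_glue e (a.fst e) (a.snd e)
  rw [glue_fst_snd_of_UTweight_eq e hk hj ha, ha] at hw
  refine ⟨funext fun u => ?_, funext fun v => ?_⟩
  · simpa [hk] using (hw (.inl u)).symm
  · simpa [hk] using (hw (.inr v)).symm

def glueEquiv : {b : UT m // UTweight b = i} × {c : UT n // UTweight c = j} ≃
    {a : UT N // UTweight a = k} where
  toFun bc := ⟨glue e bc.1 bc.2, UTweight_glue_eq e hk bc.1.2 bc.2.2⟩
  invFun a := (⟨a.1.fst e, (UTweight_fst_snd_of_UTweight_eq e hk hj a.2).1⟩,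
    ⟨a.1.snd e, (UTweight_fst_snd_of_UTweight_eq e hk hj a.2).2⟩)
  left_inv bc := by simp
  right_inv a := Subtype.ext (glue_fst_snd_of_UTweight_eq e hk hj a.2)

end WeightSubgraph

end UT

/-- If the weight `k` of `G_{m+n+1}` is a permutation of
`(i_0, …, i_m, j_0 + m + 1, …, j_n + m + 1)` with `(i_0,…,i_m) ∈ ω_m` and
`(j_0,…,j_n) ∈ ω_n`, then the weight subgraph `G(k)` is isomorphic to the box product
of the weight subgraphs `G(i)` of `G_m` and `G(j)` of `G_n`; in particular its number
of vertices is the product of the two numbers of vertices. -/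
theorem weight_subgraph_of_reducible_weight_is_product
    (m n : ℕ) (i : Fin (m + 1) → ℤ) (j : Fin (n + 1) → ℤ)
    (hj : InOmega j)
    (k : Fin (m + n + 1 + 1) → ℤ) (σ : Equiv.Perm (Fin (m + n + 1 + 1)))
    (hk : ∀ x : Fin (m + n + 1 + 1),
      k x = Fin.append i (fun y : Fin (n + 1) => j y + m + 1)
        (Fin.cast (by omega) (σ x))) :
    (∃ φ : {a : UT (m + n + 1) // UTweight a = k} ≃
        ({x : UT m // UTweight x = i} × {y : UT n // UTweight y = j}),
      ∀ a b : {a : UT (m + n + 1) // UTweight a = k},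
        UTAdj a.1 b.1 ↔
          (((φ a).2 = (φ b).2 ∧ UTAdj (φ a).1.1 (φ b).1.1) ∨
            ((φ a).1 = (φ b).1 ∧ UTAdj (φ a).2.1 (φ b).2.1))) ∧
    Nat.card {a : UT (m + n + 1) // UTweight a = k} =
      Nat.card {x : UT m // UTweight x = i} * Nat.card {y : UT n // UTweight y = j} := by
  let e : Fin (m + 1) ⊕ Fin (n + 1) ≃ Fin (m + n + 1 + 1) :=
    (finSumFinEquiv.trans (finCongr (by omega))).trans σ.symm
  have hke : ∀ z, k (e z) = Sum.elim i (fun v => j v + m + 1) z := by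
    rintro (u | v) <;> simp [e, hk]
  let ψ := UT.glueEquiv e hke hj.1
  have hglue : ∀ a, UT.glue e (ψ.symm a).1.1 (ψ.symm a).2.1 = a.1 :=
    fun a => congrArg Subtype.val (ψ.apply_symm_apply a)
  refine ⟨⟨ψ.symm, fun a b => ?_⟩, by rw [Nat.card_congr ψ.symm, Nat.card_prod]⟩
  rw [← hglue a, ← hglue b, UT.utAdj_glue_iff]
  simp only [Subtype.ext_iff]
end
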